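/- For a positive integer s and nonnegative integer r, the sum over all Dyck paths D from (0,0) to (2s,0) with at least r marked returns of q^{vmr(D)} equals q^{binomial(r+1,2)} * qbinom(2s-1, s+r). -/

import Mathlib

open Finset
open scoped Classical

/-- `(q;q)_n` as a formal power series over `ℚ`. -/
noncomputable def qp (n : ℕ) : PowerSeries ℚ :=
  ∏ i ∈ Finset.range n, (1 - (PowerSeries.X : PowerSeries ℚ) ^ (i + 1))

/-- The Gaussian binomial coefficient `qbinom(n,k)`. -/
noncomputable def qbin (n k : ℕ) : PowerSeries ℚ :=
  if k ≤ n then qp n * (qp k * qp (n - k))⁻¹ else 0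

/-- Height of the lattice path (steps `true` = up `(1,1)`, `false` = down `(1,-1)`)
after the first `k` steps. -/
def ht {L : ℕ} (p : Fin L → Bool) (k : ℕ) : ℤ :=
  ∑ i ∈ Finset.univ.filter (fun i : Fin L => (i : ℕ) < k), (if p i then (1 : ℤ) else -1)

/-- `p` is a ballot path from `(0,0)` to `(s+t, s-t)`: `s` up-steps, `t` down-steps,
never passing below the `x`-axis. -/
def IsBallot {L : ℕ} (p : Fin L → Bool) (s t : ℕ) : Prop :=
  (Finset.univ.filter fun i => p i = true).card = s ∧
  (Finset.univ.filter fun i => p i = false).card = t ∧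
  ∀ k : ℕ, 0 ≤ ht p k

/-- The point with `x`-coordinate `i` is a valley: the step before it is a down-step
and the step after it is an up-step. -/
def IsValley {L : ℕ} (p : Fin L → Bool) (i : Fin L) : Prop :=
  ∃ _ : 1 ≤ (i : ℕ),
    p ⟨(i : ℕ) - 1, lt_of_le_of_lt (Nat.sub_le _ _) i.isLt⟩ = false ∧ p i = true

/-- A return is a valley on the `x`-axis. -/
def IsReturn {L : ℕ} (p : Fin L → Bool) (i : Fin L) : Prop :=
  IsValley p i ∧ ht p (i : ℕ) = 0

/-- `maj`: sum of the `x`-coordinates of the valleys. -/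
noncomputable def pmaj {L : ℕ} (p : Fin L → Bool) : ℕ :=
  ∑ i ∈ Finset.univ.filter (fun i => IsValley p i), (i : ℕ)

/-- `vmr(D) = maj(D) - (1/2) Σ (x-coordinates of marked returns)`;
the marked returns have even `x`-coordinates, so this is an integer. -/
noncomputable def vmr {L : ℕ} (p : Fin L → Bool) (M : Finset (Fin L)) : ℕ :=
  pmaj p - (∑ i ∈ M, (i : ℕ)) / 2

/-!
Cut a Dyck path after its first `n` steps: the prefixes that end at height `h ≥ 1` and carry at
least `r` marked returns have total markedWeight `q^{C(r+1,2)} qbinom(n, (n+h)/2 + r)` (zero unless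
`n ≡ h mod 2`). This is proved by induction on `n`, appending one step at a time. A down step
changes nothing. An up step creates a valley at `x = n` exactly when the prefix ended with a
down step, adding `n` to `maj`; if that valley lies on the axis it may moreover be marked, which
contributes `n - n/2 = n/2` to `vmr` and one more mark. The closed form obeys the same recursion
by the `q`-Pascal rules and the absorption identity
`(1 - q^{k+1}) qbinom(n+1, k+1) = (1 - q^{n+1}) qbinom(n, k)`.
A Dyck path of length `2s ≥ 2` ends with a down step, so the theorem is the case
`n = 2s - 1`, `h = 1`.
-/

local notation "q" => (PowerSeries.X : PowerSeries ℚ)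

lemma qp_succ (n : ℕ) : qp (n + 1) = qp n * (1 - q ^ (n + 1)) :=
  Finset.prod_range_succ _ _

lemma constantCoeff_qp (n : ℕ) : PowerSeries.constantCoeff (qp n) = 1 := by
  simp [qp, map_prod]

lemma qp_ne_zero (n : ℕ) : qp n ≠ 0 := fun h => by
  simpa [h] using constantCoeff_qp n

lemma qbin_eq_zero_of_lt {n k : ℕ} (h : n < k) : qbin n k = 0 :=
  if_neg h.not_ge

lemma qbin_mul_qp {n k j : ℕ} (h : k + j = n) : qbin n k * (qp k * qp j) = qp n := by
  subst h
  rw [qbin, if_pos (Nat.le_add_right k j), Nat.add_sub_cancel_left, mul_assoc,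
    PowerSeries.inv_mul_cancel _ (by simp [constantCoeff_qp]), mul_one]

lemma qbin_add_symm (k j : ℕ) : qbin (k + j) k = qbin (k + j) j := by
  rw [qbin, qbin, if_pos (Nat.le_add_right k j), if_pos (Nat.le_add_left j k),
    Nat.add_sub_cancel_left, Nat.add_sub_cancel, mul_comm (qp k)]

lemma qbin_zero_right (n : ℕ) : qbin n 0 = 1 := by
  rw [qbin, if_pos n.zero_le, Nat.sub_zero, show qp 0 = 1 from Finset.prod_range_zero _, one_mul,
    PowerSeries.mul_inv_cancel _ (by simp [constantCoeff_qp])]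

lemma qbin_self (n : ℕ) : qbin n n = 1 := by
  simpa [qbin_zero_right] using qbin_add_symm n 0

lemma qbin_succ_succ (n k : ℕ) :
    qbin (n + 1) (k + 1) = qbin n k + q ^ (k + 1) * qbin n (k + 1) := by
  rcases lt_trichotomy k n with hlt | rfl | hgt
  · obtain ⟨j, rfl⟩ : ∃ j, n = k + j + 1 := ⟨n - k - 1, by omega⟩
    refine mul_right_cancel₀ (mul_ne_zero (qp_ne_zero (k + 1)) (qp_ne_zero (j + 1))) ?_
    have h1 := qbin_mul_qp (n := k + j + 1 + 1) (k := k + 1) (j := j + 1) (by ring)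
    have h2 := qbin_mul_qp (n := k + j + 1) (k := k) (j := j + 1) (by ring)
    have h3 := qbin_mul_qp (n := k + j + 1) (k := k + 1) (j := j) (by ring)
    simp only [qp_succ] at h1 h2 h3 ⊢
    linear_combination h1 - (1 - q ^ (k + 1)) * h2 - q ^ (k + 1) * (1 - q ^ (j + 1)) * h3
  · simp [qbin_self, qbin_eq_zero_of_lt]
  · simp [qbin_eq_zero_of_lt, hgt, Nat.lt_succ_of_lt hgt]

lemma qbin_succ_succ' (n k : ℕ) :
    qbin (n + 1) (k + 1) = q ^ (n - k) * qbin n k + qbin n (k + 1) := by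
  rcases lt_trichotomy k n with hlt | rfl | hgt
  · obtain ⟨j, rfl⟩ : ∃ j, n = k + j + 1 := ⟨n - k - 1, by omega⟩
    refine mul_right_cancel₀ (mul_ne_zero (qp_ne_zero (k + 1)) (qp_ne_zero (j + 1))) ?_
    have h1 := qbin_mul_qp (n := k + j + 1 + 1) (k := k + 1) (j := j + 1) (by ring)
    have h2 := qbin_mul_qp (n := k + j + 1) (k := k) (j := j + 1) (by ring)
    have h3 := qbin_mul_qp (n := k + j + 1) (k := k + 1) (j := j) (by ring)
    rw [show k + j + 1 - k = j + 1 by omega]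
    simp only [qp_succ] at h1 h2 h3 ⊢
    linear_combination h1 - q ^ (j + 1) * (1 - q ^ (k + 1)) * h2 - (1 - q ^ (j + 1)) * h3
  · simp [qbin_self, qbin_eq_zero_of_lt]
  · simp [qbin_eq_zero_of_lt, hgt, Nat.lt_succ_of_lt hgt]

lemma qbin_succ_succ_mul (n k : ℕ) :
    (1 - q ^ (k + 1)) * qbin (n + 1) (k + 1) = (1 - q ^ (n + 1)) * qbin n k := by
  rcases le_or_gt k n with hle | hgt
  · obtain ⟨j, rfl⟩ : ∃ j, n = k + j := ⟨n - k, by omega⟩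
    refine mul_right_cancel₀ (mul_ne_zero (qp_ne_zero k) (qp_ne_zero j)) ?_
    have h1 := qbin_mul_qp (n := k + j + 1) (k := k + 1) (j := j) (by ring)
    have h2 := qbin_mul_qp (n := k + j) (k := k) (j := j) rfl
    simp only [qp_succ] at h1 ⊢
    linear_combination h1 - (1 - q ^ (k + j + 1)) * h2
  · simp [qbin_eq_zero_of_lt, hgt]

/-- Indexed by `(n + h) / 2 + r` rather than by the complement `(n - h) / 2 - r`, so that the
junk value `qbin n k = 0` for `k > n` covers the cases `h > n` and `r > (n - h) / 2`. -/
noncomputable def markedSumFormula (n h r : ℕ) : PowerSeries ℚ :=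
  if Even (n + h) then q ^ (r + 1).choose 2 * qbin n ((n + h) / 2 + r) else 0

lemma markedSumFormula_of_add_eq {n h c : ℕ} (r : ℕ) (hc : n + h = 2 * c) :
    markedSumFormula n h r = q ^ (r + 1).choose 2 * qbin n (c + r) := by
  rw [markedSumFormula, if_pos ⟨c, by omega⟩, show (n + h) / 2 = c by omega]

lemma markedSumFormula_of_add_eq_succ {n h c : ℕ} (r : ℕ) (hc : n + h = 2 * c + 1) :
    markedSumFormula n h r = 0 :=
  if_neg (Nat.not_even_iff_odd.mpr ⟨c, hc⟩)

lemma markedSumFormula_eq_zero_of_lt {n h : ℕ} (r : ℕ) (hn : n < h) :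
    markedSumFormula n h r = 0 := by
  rw [markedSumFormula]
  split_ifs with he
  · rw [Nat.even_iff] at he
    rw [qbin_eq_zero_of_lt (by omega), mul_zero]
  · rfl

lemma markedSumFormula_add_two (n g r : ℕ) :
    markedSumFormula (n + 2) (g + 2) r = markedSumFormula (n + 1) (g + 3) r
      + markedSumFormula (n + 1) (g + 1) r + (q ^ (n + 1) - 1) * markedSumFormula n (g + 2) r := by
  obtain ⟨c, hc | hc⟩ : ∃ c, n + g = 2 * c ∨ n + g = 2 * c + 1 :=
    ⟨(n + g) / 2, by omega⟩
  · rw [markedSumFormula_of_add_eq r (show n + 2 + (g + 2) = 2 * (c + 2) by omega),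
      markedSumFormula_of_add_eq r (show n + 1 + (g + 3) = 2 * (c + 2) by omega),
      markedSumFormula_of_add_eq r (show n + 1 + (g + 1) = 2 * (c + 1) by omega),
      markedSumFormula_of_add_eq r (show n + (g + 2) = 2 * (c + 1) by omega),
      show c + 2 + r = c + r + 1 + 1 by ring, show c + 1 + r = c + r + 1 by ring]
    linear_combination q ^ (r + 1).choose 2 *
      (qbin_succ_succ (n + 1) (c + r + 1) - qbin_succ_succ_mul n (c + r + 1))
  · rw [markedSumFormula_of_add_eq_succ r (show n + 2 + (g + 2) = 2 * (c + 2) + 1 by omega),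
      markedSumFormula_of_add_eq_succ r (show n + 1 + (g + 3) = 2 * (c + 2) + 1 by omega),
      markedSumFormula_of_add_eq_succ r (show n + 1 + (g + 1) = 2 * (c + 1) + 1 by omega),
      markedSumFormula_of_add_eq_succ r (show n + (g + 2) = 2 * (c + 1) + 1 by omega)]
    ring

lemma markedSumFormula_one (n r : ℕ) :
    markedSumFormula (n + 2) 1 r = markedSumFormula (n + 1) 2 r
      + q ^ (n + 1) * markedSumFormula n 1 r
      + q ^ ((n + 1) / 2) * markedSumFormula n 1 (r - 1) := by
  obtain ⟨b, rfl | rfl⟩ : ∃ b, n = 2 * b + 1 ∨ n = 2 * b := ⟨n / 2, by omega⟩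
  · rw [markedSumFormula_of_add_eq r (show 2 * b + 1 + 2 + 1 = 2 * (b + 2) by ring),
      markedSumFormula_of_add_eq r (show 2 * b + 1 + 1 + 2 = 2 * (b + 2) by ring),
      markedSumFormula_of_add_eq r (show 2 * b + 1 + 1 = 2 * (b + 1) by ring),
      markedSumFormula_of_add_eq (r - 1) (show 2 * b + 1 + 1 = 2 * (b + 1) by ring),
      show (2 * b + 1 + 1) / 2 = b + 1 by omega]
    rcases r with _ | r
    · have hsymm : qbin (2 * b + 1) b = qbin (2 * b + 1) (b + 1) := by
        rw [show 2 * b + 1 = b + (b + 1) by ring, qbin_add_symm]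
      have hP2 := qbin_succ_succ' (2 * b + 1 + 1) (b + 1)
      rw [show 2 * b + 1 + 1 - (b + 1) = b + 1 by omega] at hP2
      simp only [zero_add, Nat.zero_sub, add_zero, show Nat.choose 1 2 = 0 from rfl, pow_zero,
        one_mul]
      linear_combination hP2 + q ^ (b + 1) * qbin_succ_succ (2 * b + 1) b + q ^ (b + 1) * hsymm
    · rw [Nat.add_sub_cancel, Nat.choose_succ_succ' (r + 1), Nat.choose_one_right, pow_add]
      rcases le_or_gt r b with hrb | hrb
      · obtain ⟨d, rfl⟩ : ∃ d, b = r + d := ⟨b - r, by omega⟩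
        have hP2 := qbin_succ_succ' (2 * (r + d) + 2) (r + d + r + 2)
        rw [show 2 * (r + d) + 2 - (r + d + r + 2) = d by omega] at hP2
        have hP1 := qbin_succ_succ (2 * (r + d) + 1) (r + d + r + 1)
        generalize (r + 1).choose 2 = t
        ring_nf at hP1 hP2 ⊢
        linear_combination q ^ t * q ^ (r + 1) * (hP2 + q ^ d * hP1)
      · rw [qbin_eq_zero_of_lt (show 2 * b + 1 + 2 < b + 2 + (r + 1) by omega),
          qbin_eq_zero_of_lt (show 2 * b + 1 + 1 < b + 2 + (r + 1) by omega),
          qbin_eq_zero_of_lt (show 2 * b + 1 < b + 1 + (r + 1) by omega),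
          qbin_eq_zero_of_lt (show 2 * b + 1 < b + 1 + r by omega)]
        ring
  · rw [markedSumFormula_of_add_eq_succ r (show 2 * b + 2 + 1 = 2 * (b + 1) + 1 by ring),
      markedSumFormula_of_add_eq_succ r (show 2 * b + 1 + 2 = 2 * (b + 1) + 1 by ring),
      markedSumFormula_of_add_eq_succ r rfl,
      markedSumFormula_of_add_eq_succ (r - 1) rfl]
    ring

section Decompose

variable {M : Type*} [AddCommMonoid M] {n : ℕ}

lemma sum_bool_tuple_succ (f : (Fin (n + 1) → Bool) → M) :
    ∑ p, f p = ∑ p : Fin n → Bool, (f (Fin.snoc p false) + f (Fin.snoc p true)) := by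
  rw [← (Fin.snocEquiv fun _ => Bool).sum_comp, Fintype.sum_prod_type, Fintype.sum_bool,
    ← Finset.sum_add_distrib]
  exact Finset.sum_congr rfl fun p _ => add_comm _ _

lemma sum_finset_fin_succ (f : Finset (Fin (n + 1)) → M) :
    ∑ B, f B = ∑ A : Finset (Fin n),
      (f (A.map Fin.castSuccEmb) + f (insert (Fin.last n) (A.map Fin.castSuccEmb))) := by
  have huniv : (univ : Finset (Fin (n + 1))) = insert (Fin.last n) (univ.map Fin.castSuccEmb) := by
    ext i; induction i using Fin.lastCases <;> simp [Fin.castSucc_ne_last]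
  have hpow : (univ.map Fin.castSuccEmb).powerset =
      (univ : Finset (Finset (Fin n))).map (Finset.mapEmbedding Fin.castSuccEmb).toEmbedding := by
    ext t; simp [Finset.subset_map_iff, eq_comm]
  rw [← Finset.powerset_univ, huniv, Finset.sum_powerset_insert (by simp), hpow,
    Finset.sum_map, Finset.sum_map, ← Finset.sum_add_distrib]
  rfl

end Decompose

section Heights

variable {n : ℕ}

lemma ht_snoc (p : Fin n → Bool) (c : Bool) (k : ℕ) :
    ht (Fin.snoc p c) k = ht p k + if n < k then (if c then 1 else -1) else 0 := by
  simp only [ht, Finset.sum_filter, Fin.sum_univ_castSucc, Fin.snoc_castSucc, Fin.val_castSucc,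
    Fin.snoc_last, Fin.val_last]

lemma ht_of_le (p : Fin n → Bool) {k : ℕ} (hk : n ≤ k) : ht p k = ht p n := by
  simp only [ht, Finset.sum_filter]
  exact Finset.sum_congr rfl fun i _ => by simp [i.isLt, i.isLt.trans_le hk]

lemma ht_fin_zero (p : Fin 0 → Bool) (k : ℕ) : ht p k = 0 := by
  simp [ht]

lemma even_ht_add (p : Fin n → Bool) {k : ℕ} (hk : k ≤ n) : Even (ht p k + k) := by
  have hcard : ((univ.filter fun i : Fin n => (i : ℕ) < k).card : ℤ) = k := by
    rw [Fin.card_filter_val_lt, min_eq_right hk]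
  refine ⟨∑ i ∈ univ.filter fun i : Fin n => (i : ℕ) < k, if p i then 1 else 0, ?_⟩
  rw [← hcard, ht, Finset.card_eq_sum_ones, Nat.cast_sum, ← Finset.sum_add_distrib,
    ← Finset.sum_add_distrib]
  exact Finset.sum_congr rfl fun i _ => by split <;> norm_num

lemma even_of_ht_eq_zero (p : Fin n → Bool) {k : ℕ} (hk : k ≤ n) (h0 : ht p k = 0) :
    Even k := by
  simpa [h0] using even_ht_add p hk

lemma ht_length (p : Fin n → Bool) :
    ht p n = (univ.filter fun i => p i = true).card - (univ.filter fun i => p i = false).card := by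
  simp [ht, Finset.sum_ite, Bool.not_eq_true, sub_eq_add_neg]

lemma isBallot_iff (p : Fin (n + n) → Bool) :
    IsBallot p n n ↔ (∀ k, 0 ≤ ht p k) ∧ ht p (n + n) = 0 := by
  have hcard := Finset.card_filter_add_card_filter_not (s := univ) fun i => p i = true
  simp only [Bool.not_eq_true, Finset.card_univ, Fintype.card_fin] at hcard
  rw [IsBallot, ht_length]
  constructor
  · rintro ⟨hup, hdown, hnonneg⟩
    exact ⟨hnonneg, by omega⟩
  · rintro ⟨hnonneg, hend⟩
    exact ⟨by omega, by omega, hnonneg⟩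

end Heights

section Snoc

variable {n : ℕ}

lemma ht_snoc_of_le (p : Fin n → Bool) (c : Bool) {k : ℕ} (hk : k ≤ n) :
    ht (Fin.snoc p c) k = ht p k := by
  rw [ht_snoc, if_neg hk.not_gt, add_zero]

lemma ht_snoc_succ (p : Fin n → Bool) (c : Bool) :
    ht (Fin.snoc p c) (n + 1) = ht p n + if c then 1 else -1 := by
  rw [ht_snoc, if_pos n.lt_succ_self, ht_of_le p n.le_succ]

lemma nonneg_ht_snoc_iff (p : Fin n → Bool) (c : Bool) :
    (∀ k, 0 ≤ ht (Fin.snoc p c) k) ↔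
      (∀ k, 0 ≤ ht p k) ∧ 0 ≤ ht p n + if c then 1 else -1 := by
  refine ⟨fun h => ⟨fun k => ?_, ht_snoc_succ p c ▸ h (n + 1)⟩, fun ⟨h, hn⟩ k => ?_⟩
  · rcases le_or_gt k n with hk | hk
    · exact ht_snoc_of_le p c hk ▸ h k
    · exact ht_of_le p hk.le ▸ ht_snoc_of_le p c le_rfl ▸ h n
  · rcases le_or_gt k n with hk | hk
    · exact (ht_snoc_of_le p c hk).symm ▸ h k
    · rwa [ht_snoc, if_pos hk, ht_of_le p hk.le]

def EndsWithDown (p : Fin n → Bool) : Prop :=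
  ∃ _ : 1 ≤ n, p ⟨n - 1, by omega⟩ = false

lemma snoc_mk_of_lt (p : Fin n → Bool) (c : Bool) {j : ℕ} (hj : j < n) :
    (Fin.snoc p c : Fin (n + 1) → Bool) ⟨j, by omega⟩ = p ⟨j, hj⟩ :=
  Fin.snoc_castSucc (i := ⟨j, hj⟩) ..

lemma endsWithDown_snoc (p : Fin n → Bool) (c : Bool) :
    EndsWithDown (Fin.snoc p c) ↔ c = false := by
  change (∃ _ : 1 ≤ n + 1, (Fin.snoc p c : Fin (n + 1) → Bool) (Fin.last n) = false) ↔ _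
  simp

lemma isValley_snoc_castSucc (p : Fin n → Bool) (c : Bool) (i : Fin n) :
    IsValley (Fin.snoc p c) i.castSucc ↔ IsValley p i := by
  simp only [IsValley, Fin.val_castSucc, Fin.snoc_castSucc]
  exact exists_congr fun hi => by rw [snoc_mk_of_lt p c (by omega)]

lemma isValley_snoc_last (p : Fin n → Bool) (c : Bool) :
    IsValley (Fin.snoc p c) (Fin.last n) ↔ EndsWithDown p ∧ c = true := by
  simp only [IsValley, EndsWithDown, Fin.val_last, Fin.snoc_last, exists_and_right]
  exact and_congr_left' (exists_congr fun hn => by rw [snoc_mk_of_lt p c (by omega)])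

lemma isReturn_snoc_castSucc (p : Fin n → Bool) (c : Bool) (i : Fin n) :
    IsReturn (Fin.snoc p c) i.castSucc ↔ IsReturn p i := by
  rw [IsReturn, IsReturn, isValley_snoc_castSucc, Fin.val_castSucc, ht_snoc_of_le p c i.isLt.le]

lemma isReturn_snoc_last (p : Fin n → Bool) (c : Bool) :
    IsReturn (Fin.snoc p c) (Fin.last n) ↔ (EndsWithDown p ∧ c = true) ∧ ht p n = 0 := by
  rw [IsReturn, isValley_snoc_last, Fin.val_last, ht_snoc_of_le p c le_rfl]

lemma pmaj_snoc (p : Fin n → Bool) (c : Bool) :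
    pmaj (Fin.snoc p c) = pmaj p + if EndsWithDown p ∧ c = true then n else 0 := by
  simp only [pmaj, Finset.sum_filter, Fin.sum_univ_castSucc, isValley_snoc_castSucc,
    isValley_snoc_last, Fin.val_castSucc, Fin.val_last]

lemma sum_le_pmaj (p : Fin n → Bool) {A : Finset (Fin n)} (hA : ∀ i ∈ A, IsValley p i) :
    ∑ i ∈ A, (i : ℕ) ≤ pmaj p :=
  Finset.sum_le_sum_of_subset fun i hi => Finset.mem_filter.mpr ⟨Finset.mem_univ i, hA i hi⟩

lemma two_dvd_sum_of_isReturn (p : Fin n → Bool) {A : Finset (Fin n)}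
    (hA : ∀ i ∈ A, IsReturn p i) : 2 ∣ ∑ i ∈ A, (i : ℕ) :=
  Finset.dvd_sum fun i hi => (even_of_ht_eq_zero p i.isLt.le (hA i hi).2).two_dvd

lemma vmr_snoc_false (p : Fin n → Bool) (A : Finset (Fin n)) :
    vmr (Fin.snoc p false) (A.map Fin.castSuccEmb) = vmr p A := by
  simp [vmr, pmaj_snoc]

lemma vmr_snoc_true (p : Fin n → Bool) {A : Finset (Fin n)} (hA : ∀ i ∈ A, IsReturn p i) :
    vmr (Fin.snoc p true) (A.map Fin.castSuccEmb) = vmr p A + if EndsWithDown p then n else 0 := by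
  have hle := sum_le_pmaj p fun i hi => (hA i hi).1
  simp only [vmr, pmaj_snoc, Finset.sum_map, Fin.castSuccEmb_apply, Fin.val_castSucc, and_true]
  split_ifs <;> omega

lemma vmr_snoc_true_insert (p : Fin n → Bool) {A : Finset (Fin n)}
    (hA : ∀ i ∈ A, IsReturn p i)
    (hd : EndsWithDown p) (h0 : ht p n = 0) :
    vmr (Fin.snoc p true) (insert (Fin.last n) (A.map Fin.castSuccEmb)) = vmr p A + n / 2 := by
  have hle := sum_le_pmaj p fun i hi => (hA i hi).1
  have hA2 := two_dvd_sum_of_isReturn p hA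
  have hn2 := (even_of_ht_eq_zero p le_rfl h0).two_dvd
  rw [vmr, vmr, pmaj_snoc, if_pos ⟨hd, rfl⟩, Finset.sum_insert (by simp), Finset.sum_map]
  simp only [Fin.castSuccEmb_apply, Fin.val_castSucc, Fin.val_last]
  omega

end Snoc

section MarkedSums

variable {n : ℕ}

def IsMarkedPrefix (h r : ℕ) (p : Fin n → Bool) (A : Finset (Fin n)) : Prop :=
  (∀ k, 0 ≤ ht p k) ∧ ht p n = h ∧ (∀ i ∈ A, IsReturn p i) ∧ r ≤ A.card

noncomputable def markedWeight (h r : ℕ) (p : Fin n → Bool) (A : Finset (Fin n)) :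
    PowerSeries ℚ :=
  if IsMarkedPrefix h r p A then q ^ vmr p A else 0

lemma isMarkedPrefix_snoc_false_map (h r : ℕ) (p : Fin n → Bool) (A : Finset (Fin n)) :
    IsMarkedPrefix h r (Fin.snoc p false) (A.map Fin.castSuccEmb) ↔
      IsMarkedPrefix (h + 1) r p A := by
  simp only [IsMarkedPrefix, nonneg_ht_snoc_iff, ht_snoc_succ, Finset.forall_mem_map,
    Fin.castSuccEmb_apply, isReturn_snoc_castSucc, Finset.card_map, Bool.false_eq_true, if_false]
  constructor
  · rintro ⟨⟨hnonneg, -⟩, hend, hA, hr⟩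
    exact ⟨hnonneg, by push_cast at hend ⊢; omega, hA, hr⟩
  · rintro ⟨hnonneg, hend, hA, hr⟩
    exact ⟨⟨hnonneg, by omega⟩, by push_cast at hend ⊢; omega, hA, hr⟩

lemma not_isMarkedPrefix_snoc_false_insert (h r : ℕ) (p : Fin n → Bool) (A : Finset (Fin n)) :
    ¬ IsMarkedPrefix h r (Fin.snoc p false) (insert (Fin.last n) (A.map Fin.castSuccEmb)) := by
  simp [IsMarkedPrefix, isReturn_snoc_last]

lemma isMarkedPrefix_snoc_true_map (h r : ℕ) (p : Fin n → Bool) (A : Finset (Fin n)) :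
    IsMarkedPrefix (h + 1) r (Fin.snoc p true) (A.map Fin.castSuccEmb) ↔
      IsMarkedPrefix h r p A := by
  simp only [IsMarkedPrefix, nonneg_ht_snoc_iff, ht_snoc_succ, Finset.forall_mem_map,
    Fin.castSuccEmb_apply, isReturn_snoc_castSucc, Finset.card_map, if_true]
  constructor
  · rintro ⟨⟨hnonneg, -⟩, hend, hA, hr⟩
    exact ⟨hnonneg, by push_cast at hend; omega, hA, hr⟩
  · rintro ⟨hnonneg, hend, hA, hr⟩
    exact ⟨⟨hnonneg, by omega⟩, by push_cast; omega, hA, hr⟩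

lemma not_isMarkedPrefix_zero_snoc_true (r : ℕ) (p : Fin n → Bool) (B : Finset (Fin (n + 1))) :
    ¬ IsMarkedPrefix 0 r (Fin.snoc p true) B := by
  rintro ⟨hnonneg, hend, -⟩
  rw [ht_snoc_succ, if_pos rfl] at hend
  have := hnonneg n
  rw [ht_snoc_of_le p true le_rfl] at this
  omega

lemma isMarkedPrefix_snoc_true_insert (h r : ℕ) (p : Fin n → Bool) (A : Finset (Fin n)) :
    IsMarkedPrefix (h + 1) r (Fin.snoc p true) (insert (Fin.last n) (A.map Fin.castSuccEmb)) ↔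
      h = 0 ∧ EndsWithDown p ∧ IsMarkedPrefix 0 (r - 1) p A := by
  simp only [IsMarkedPrefix, nonneg_ht_snoc_iff, ht_snoc_succ, Finset.forall_mem_insert,
    Finset.forall_mem_map, Fin.castSuccEmb_apply, isReturn_snoc_castSucc, isReturn_snoc_last,
    Finset.card_insert_of_notMem (show Fin.last n ∉ A.map Fin.castSuccEmb by simp),
    Finset.card_map, if_true, and_true]
  constructor
  · rintro ⟨⟨hnonneg, -⟩, hend, ⟨⟨hd, h0⟩, hA⟩, hr⟩
    exact ⟨by push_cast at hend; omega, hd, hnonneg, by simpa using h0, hA, by omega⟩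
  · rintro ⟨rfl, hd, hnonneg, h0, hA, hr⟩
    simp only [Nat.cast_zero] at h0
    exact ⟨⟨hnonneg, by omega⟩, by push_cast; omega, ⟨⟨hd, h0⟩, hA⟩, by omega⟩

lemma markedWeight_snoc_false_map (h r : ℕ) (p : Fin n → Bool) (A : Finset (Fin n)) :
    markedWeight h r (Fin.snoc p false) (A.map Fin.castSuccEmb) = markedWeight (h + 1) r p A := by
  simp only [markedWeight, isMarkedPrefix_snoc_false_map, vmr_snoc_false]

lemma markedWeight_snoc_false_insert (h r : ℕ) (p : Fin n → Bool) (A : Finset (Fin n)) :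
    markedWeight h r (Fin.snoc p false) (insert (Fin.last n) (A.map Fin.castSuccEmb)) = 0 :=
  if_neg (not_isMarkedPrefix_snoc_false_insert h r p A)

lemma markedWeight_zero_snoc_true (r : ℕ) (p : Fin n → Bool) (B : Finset (Fin (n + 1))) :
    markedWeight 0 r (Fin.snoc p true) B = 0 :=
  if_neg (not_isMarkedPrefix_zero_snoc_true r p B)

lemma markedWeight_snoc_true_map (h r : ℕ) (p : Fin n → Bool) (A : Finset (Fin n)) :
    markedWeight (h + 1) r (Fin.snoc p true) (A.map Fin.castSuccEmb)
      = (if EndsWithDown p then q ^ n else 1) * markedWeight h r p A := by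
  by_cases hpre : IsMarkedPrefix h r p A
  · rw [markedWeight, markedWeight, if_pos ((isMarkedPrefix_snoc_true_map h r p A).mpr hpre),
      if_pos hpre, vmr_snoc_true p hpre.2.2.1, pow_add]
    split_ifs <;> ring
  · rw [markedWeight, markedWeight, if_neg (mt (isMarkedPrefix_snoc_true_map h r p A).mp hpre),
      if_neg hpre, mul_zero]

lemma markedWeight_snoc_true_insert (h r : ℕ) (p : Fin n → Bool) (A : Finset (Fin n)) :
    markedWeight (h + 1) r (Fin.snoc p true) (insert (Fin.last n) (A.map Fin.castSuccEmb))
      = if h = 0 ∧ EndsWithDown p then q ^ (n / 2) * markedWeight 0 (r - 1) p A else 0 := by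
  by_cases hpre : h = 0 ∧ EndsWithDown p ∧ IsMarkedPrefix 0 (r - 1) p A
  · obtain ⟨h0, hd, hpre⟩ := hpre
    rw [markedWeight, markedWeight,
      if_pos ((isMarkedPrefix_snoc_true_insert h r p A).mpr ⟨h0, hd, hpre⟩),
      if_pos ⟨h0, hd⟩, if_pos hpre,
      vmr_snoc_true_insert p hpre.2.2.1 hd (by exact_mod_cast hpre.2.1), pow_add, mul_comm]
  · rw [markedWeight, if_neg (mt (isMarkedPrefix_snoc_true_insert h r p A).mp hpre)]
    split_ifs with hhd
    · rw [markedWeight, if_neg fun h' => hpre ⟨hhd.1, hhd.2, h'⟩, mul_zero]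
    · rfl

end MarkedSums

noncomputable def markedSum (n h r : ℕ) : PowerSeries ℚ :=
  ∑ p : Fin n → Bool, ∑ A, markedWeight h r p A

noncomputable def markedSumDown (n h r : ℕ) : PowerSeries ℚ :=
  ∑ p : Fin n → Bool, if EndsWithDown p then ∑ A, markedWeight h r p A else 0

lemma markedSum_zero (h r : ℕ) : markedSum 0 h r = if h = 0 ∧ r = 0 then 1 else 0 := by
  have hA (A : Finset (Fin 0)) : A = ∅ := Finset.eq_empty_of_isEmpty A
  simp [markedSum, markedWeight, IsMarkedPrefix, ht_fin_zero, vmr, pmaj, hA, eq_comm]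

lemma markedSumDown_zero (h r : ℕ) : markedSumDown 0 h r = 0 := by
  simp [markedSumDown, EndsWithDown]

lemma markedSumDown_succ (n h r : ℕ) : markedSumDown (n + 1) h r = markedSum n (h + 1) r := by
  simp [markedSumDown, markedSum, sum_bool_tuple_succ, endsWithDown_snoc, sum_finset_fin_succ,
    markedWeight_snoc_false_map, markedWeight_snoc_false_insert]

lemma markedSum_succ_zero (n r : ℕ) : markedSum (n + 1) 0 r = markedSum n 1 r := by
  simp [markedSum, sum_bool_tuple_succ, sum_finset_fin_succ, markedWeight_snoc_false_map,
    markedWeight_snoc_false_insert, markedWeight_zero_snoc_true]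

lemma markedSum_succ_succ (n h r : ℕ) :
    markedSum (n + 1) (h + 1) r = markedSum n (h + 2) r + markedSum n h r
      + (q ^ n - 1) * markedSumDown n h r
      + if h = 0 then q ^ (n / 2) * markedSumDown n 0 (r - 1) else 0 := by
  simp only [markedSum, markedSumDown, sum_bool_tuple_succ, sum_finset_fin_succ,
    markedWeight_snoc_false_map, markedWeight_snoc_false_insert, markedWeight_snoc_true_map,
    markedWeight_snoc_true_insert, Finset.sum_add_distrib]
  have hdown (p : Fin n → Bool) :
      ∑ A, (if EndsWithDown p then q ^ n else 1) * markedWeight h r p A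
        = ∑ A, markedWeight h r p A
          + (q ^ n - 1) * if EndsWithDown p then ∑ A, markedWeight h r p A else 0 := by
    split_ifs
    · rw [← Finset.mul_sum]
      ring
    · simp only [one_mul, mul_zero, add_zero]
  have hmark (p : Fin n → Bool) :
      ∑ A, (if h = 0 ∧ EndsWithDown p then q ^ (n / 2) * markedWeight 0 (r - 1) p A else 0)
        = if h = 0 then
            q ^ (n / 2) * if EndsWithDown p then ∑ A, markedWeight 0 (r - 1) p A else 0
          else 0 := by
    by_cases h0 : h = 0 <;> by_cases hd : EndsWithDown p <;> simp [h0, hd, Finset.mul_sum]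
  simp only [hdown, hmark, Finset.sum_add_distrib, ← Finset.mul_sum]
  split_ifs <;> simp only [Finset.mul_sum, mul_ite, mul_zero, Finset.sum_const_zero] <;> ring

theorem markedSum_eq_markedSumFormula (n h r : ℕ) :
    markedSum n (h + 1) r = markedSumFormula n (h + 1) r := by
  induction n using Nat.twoStepInduction generalizing h r with
  | zero => rw [markedSum_zero, if_neg (by omega), markedSumFormula_eq_zero_of_lt r (by omega)]
  | one =>
    rw [markedSum_succ_succ, markedSum_zero, markedSum_zero, markedSumDown_zero, markedSumDown_zero]
    rcases h with _ | h
    · rw [markedSumFormula_of_add_eq r (show 1 + 1 = 2 * 1 by rfl)]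
      rcases r with _ | r
      · simp [qbin_self]
      · simp [qbin_eq_zero_of_lt]
    · simp [markedSumFormula_eq_zero_of_lt r (show 1 < h + 1 + 1 by omega)]
  | more n ih ih' =>
    rw [markedSum_succ_succ, markedSumDown_succ, ih]
    rcases h with _ | g
    · rw [markedSum_succ_zero, markedSumDown_succ, ih, ih, ih', markedSumFormula_one, if_pos rfl]
      ring
    · rw [ih', ih', if_neg g.succ_ne_zero, markedSumFormula_add_two]
      ring

lemma sum_isBallot_eq_markedSum (s r : ℕ) :
    ∑ x ∈ (univ : Finset ((Fin (s + s) → Bool) × Finset (Fin (s + s)))).filter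
        (fun x => IsBallot x.1 s s ∧ (∀ i ∈ x.2, IsReturn x.1 i) ∧ r ≤ x.2.card),
      q ^ vmr x.1 x.2 = markedSum (s + s) 0 r := by
  rw [Finset.sum_filter, Fintype.sum_prod_type]
  refine Finset.sum_congr rfl fun p _ => Finset.sum_congr rfl fun A _ => ?_
  simp only [markedWeight, IsMarkedPrefix, isBallot_iff, Nat.cast_zero, and_assoc]

/-- The sum of `q^{vmr(D)}` over all Dyck paths `D` from `(0,0)` to `(2s,0)`
with at least `r` marked returns equals `q^{C(r+1,2)} qbinom(2s-1, s+r)`. -/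
theorem stmt_3 (s r : ℕ) (hs : 1 ≤ s) :
    ∑ x ∈ (Finset.univ : Finset ((Fin (s + s) → Bool) × Finset (Fin (s + s)))).filter
        (fun x => IsBallot x.1 s s ∧
          (∀ i ∈ x.2, IsReturn x.1 i) ∧ r ≤ x.2.card),
      (PowerSeries.X : PowerSeries ℚ) ^ vmr x.1 x.2
      = PowerSeries.X ^ ((r + 1).choose 2) * qbin (2 * s - 1) (s + r) := by
  obtain ⟨m, hm⟩ : ∃ m, s + s = m + 1 := ⟨s + s - 1, by omega⟩
  rw [sum_isBallot_eq_markedSum, hm, markedSum_succ_zero, markedSum_eq_markedSumFormula m 0 r,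
    markedSumFormula_of_add_eq r (show m + (0 + 1) = 2 * s by omega), show m = 2 * s - 1 by omega]
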